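/- Let d ≥ 2, p, q ∈ [0,1], and γ ≥ 1. For the isotropic states ζ^q and ζ^p on ℂ^d ⊗ ℂ^d, the PPT-measured hockey-stick divergence satisfies E_γ^PPT(ζ^q‖ζ^p) = max{0, (q − γp) + ((1−q) − γ(1−p))/(d+1), (d/(d+1))·((1−q) − γ(1−p))}. -/

import Mathlib

/-!
For a test `M` put `t = Re Tr[MΦ]` and `m = Re Tr M`. Since `ζ^q - γζ^p` is a combination of `Φ`
and `1 - Φ`, the objective is `a t + c (m - t)` with `a = q - γp` and
`c = ((1 - q) - γ(1 - p)) / (d² - 1)`. Pairing `M ≥ 0` and `1 - M ≥ 0` with the projection `Φ`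
gives `0 ≤ t ≤ 1`; pairing `T_B(M) ≥ 0` with `1 - F`, where `F = d T_B(Φ)` is the swap, gives
`d t ≤ m` because `Tr[T_B(A) B] = Tr[A T_B(B)]`, and the same applied to `1 - M` gives
`m ≤ d² - d + d t`. At the four vertices of this quadrilateral the objective takes the values
`0`, `a + c (d - 1)`, `c (d² - d)` and `a + c (d² - 1) = 1 - γ ≤ 0`. The first three are attained
by `0`, by `M₁ = Φ + (1 - Φ)/(d + 1)`, whose partial transpose is `(1 + F)/(d + 1)`, and by
`1 - M₁`.
-/

noncomputable section
open Matrix ComplexOrder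

/-- Bipartite complex matrices on ℂ^d ⊗ ℂ^d. -/
abbrev BMat (d : ℕ) := Matrix (Fin d × Fin d) (Fin d × Fin d) ℂ

/-- The maximally entangled state `Φ = (1/d) Σ_{i,j} |i⟩⟨j| ⊗ |i⟩⟨j|`. -/
def maxEnt (d : ℕ) : BMat d :=
  fun p q => if p.1 = p.2 ∧ q.1 = q.2 then ((d : ℂ))⁻¹ else 0

/-- The orthogonal complement state `Φ⊥ = (I − Φ)/(d² − 1)`. -/
def maxEntPerp (d : ℕ) : BMat d := (((d : ℂ) ^ 2 - 1))⁻¹ • (1 - maxEnt d)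

/-- The isotropic state `ζ^p = pΦ + (1−p)Φ⊥`. -/
def iso (d : ℕ) (p : ℝ) : BMat d := (p : ℂ) • maxEnt d + ((1 - p : ℝ) : ℂ) • maxEntPerp d

/-- The partial transpose on the second tensor factor:
`T_B(M)((a,b),(a',b')) := M((a,b'),(a',b))`. -/
def ptB {d : ℕ} (M : BMat d) : BMat d :=
  fun p q => M (p.1, q.2) (q.1, p.2)

/-- PPT-measured hockey-stick divergence for γ ≥ 1. -/
def EgPPT {d : ℕ} (γ : ℝ) (ρ σ : BMat d) : ℝ :=
  sSup {x : ℝ | ∃ M : BMat d, M.PosSemidef ∧ ((1 : BMat d) - M).PosSemidef ∧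
    (ptB M).PosSemidef ∧ ((1 : BMat d) - ptB M).PosSemidef ∧
    x = ((M * (ρ - (γ : ℂ) • σ)).trace).re}

namespace Matrix

variable {n 𝕜 : Type*} [Fintype n] [RCLike 𝕜]

open scoped MatrixOrder in
lemma PosSemidef.trace_mul_nonneg {A B : Matrix n n 𝕜} (hA : A.PosSemidef) (hB : B.PosSemidef) :
    0 ≤ (A * B).trace := by
  classical
  obtain ⟨C, rfl⟩ := CStarAlgebra.nonneg_iff_eq_star_mul_self.mp hB.nonneg
  rw [star_eq_conjTranspose, ← Matrix.mul_assoc, trace_mul_cycle]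
  exact (hA.mul_mul_conjTranspose_same C).trace_nonneg

lemma IsHermitian.posSemidef_of_isIdempotentElem {P : Matrix n n 𝕜} (hP : P.IsHermitian)
    (hPP : IsIdempotentElem P) : P.PosSemidef := by
  simpa [hP.eq, hPP.eq] using posSemidef_conjTranspose_mul_self P

variable [DecidableEq n]

lemma IsHermitian.posSemidef_one_add_of_mul_self_eq_one {U : Matrix n n 𝕜} (hU : U.IsHermitian)
    (hUU : U * U = 1) : (1 + U).PosSemidef := by
  have h : 1 + U = (2⁻¹ : ℝ) • ((1 + U)ᴴ * (1 + U)) := by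
    simp only [conjTranspose_add, conjTranspose_one, hU.eq, add_mul, mul_add, hUU, one_mul, mul_one]
    module
  rw [h]
  exact (posSemidef_conjTranspose_mul_self _).smul (by norm_num)

end Matrix

def swapMat (d : ℕ) : BMat d := fun p q => if p.1 = q.2 ∧ p.2 = q.1 then 1 else 0

section Bipartite

variable {d : ℕ}

lemma isHermitian_maxEnt : (maxEnt d).IsHermitian := by
  ext p q
  simp only [conjTranspose_apply, maxEnt]
  split_ifs <;> simp_all

lemma isIdempotentElem_maxEnt [NeZero d] : IsIdempotentElem (maxEnt d) := by
  ext p q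
  by_cases hp : p.1 = p.2 <;> by_cases hq : q.1 = q.2 <;>
    simp [mul_apply, maxEnt, Fintype.sum_prod_type, hp, hq, NeZero.ne]

lemma trace_maxEnt [NeZero d] : (maxEnt d).trace = 1 := by
  simp [trace, maxEnt, Fintype.sum_prod_type, NeZero.ne]

lemma trace_one_bipartite : (1 : BMat d).trace = (((d : ℝ) ^ 2 : ℝ) : ℂ) := by
  simp [sq]

lemma isHermitian_swapMat : (swapMat d).IsHermitian := by
  ext p q
  simp only [conjTranspose_apply, swapMat]
  split_ifs <;> simp_all

lemma swapMat_mul_self : swapMat d * swapMat d = 1 := by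
  ext p q
  simp [mul_apply, swapMat, one_apply, Fintype.sum_prod_type, Prod.ext_iff, ite_and, eq_comm]

lemma ptB_one : ptB (1 : BMat d) = 1 := by
  ext p q
  simp only [ptB, one_apply, Prod.ext_iff, eq_comm (a := q.2)]

lemma ptB_maxEnt : ptB (maxEnt d) = (d : ℝ)⁻¹ • swapMat d := by
  ext p q
  simp only [ptB, maxEnt, swapMat, Matrix.smul_apply, smul_ite, smul_zero, Complex.real_smul,
    mul_one, Complex.ofReal_inv, Complex.ofReal_natCast, eq_comm (a := q.1)]

lemma ptB_ptB (M : BMat d) : ptB (ptB M) = M := rfl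

lemma ptB_one_sub (M : BMat d) : ptB (1 - M) = 1 - ptB M := by
  show ptB 1 - ptB M = 1 - ptB M
  rw [ptB_one]

lemma trace_ptB_mul (A B : BMat d) : (ptB A * B).trace = (A * ptB B).trace := by
  simp only [trace, diag, mul_apply, ptB, Fintype.sum_prod_type]
  refine Finset.sum_congr rfl fun a _ => ?_
  rw [Finset.sum_comm, eq_comm, Finset.sum_comm]
  exact Finset.sum_congr rfl fun _ _ => Finset.sum_comm

lemma posSemidef_maxEnt [NeZero d] : (maxEnt d).PosSemidef :=
  isHermitian_maxEnt.posSemidef_of_isIdempotentElem isIdempotentElem_maxEnt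

lemma posSemidef_one_sub_maxEnt [NeZero d] : (1 - maxEnt d).PosSemidef :=
  (isHermitian_one.sub isHermitian_maxEnt).posSemidef_of_isIdempotentElem
    isIdempotentElem_maxEnt.one_sub

lemma posSemidef_one_add_swapMat : (1 + swapMat d).PosSemidef :=
  isHermitian_swapMat.posSemidef_one_add_of_mul_self_eq_one swapMat_mul_self

lemma posSemidef_one_sub_swapMat : (1 - swapMat d).PosSemidef := by
  simpa [sub_eq_add_neg] using
    isHermitian_swapMat.neg.posSemidef_one_add_of_mul_self_eq_one
      (by rw [neg_mul_neg, swapMat_mul_self])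

lemma trace_ptB_mul_swapMat [NeZero d] (M : BMat d) :
    (ptB M * swapMat d).trace = d * (M * maxEnt d).trace := by
  have hF : swapMat d = (d : ℝ) • ptB (maxEnt d) := by
    rw [ptB_maxEnt, smul_smul, mul_inv_cancel₀ (NeZero.ne _), one_smul]
  rw [hF, mul_smul_comm, trace_smul, trace_ptB_mul, ptB_ptB, Complex.real_smul,
    Complex.ofReal_natCast]

lemma re_trace_mul_maxEnt_nonneg [NeZero d] {M : BMat d} (hM : M.PosSemidef) :
    0 ≤ ((M * maxEnt d).trace).re :=
  (Complex.nonneg_iff.mp (hM.trace_mul_nonneg posSemidef_maxEnt)).1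

lemma re_trace_mul_maxEnt_le_one [NeZero d] {M : BMat d} (hM : (1 - M).PosSemidef) :
    ((M * maxEnt d).trace).re ≤ 1 := by
  have := re_trace_mul_maxEnt_nonneg hM
  rw [sub_mul, one_mul, trace_sub, trace_maxEnt, Complex.sub_re, Complex.one_re] at this
  linarith

lemma natCast_mul_re_trace_mul_maxEnt_le [NeZero d] {M : BMat d} (hM : (ptB M).PosSemidef) :
    d * ((M * maxEnt d).trace).re ≤ (M.trace).re := by
  have := (Complex.nonneg_iff.mp (hM.trace_mul_nonneg posSemidef_one_sub_swapMat)).1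
  rw [mul_sub, mul_one, trace_sub, trace_ptB_mul_swapMat, Complex.sub_re,
    ← Complex.ofReal_natCast, Complex.re_ofReal_mul] at this
  exact sub_nonneg.mp this

lemma re_trace_le [NeZero d] {M : BMat d} (hM : (1 - ptB M).PosSemidef) :
    (M.trace).re ≤ d ^ 2 - d + d * ((M * maxEnt d).trace).re := by
  have := natCast_mul_re_trace_mul_maxEnt_le (M := 1 - M) (by rwa [ptB_one_sub])
  rw [sub_mul, one_mul, trace_sub, trace_sub, trace_maxEnt, trace_one_bipartite] at this
  simp only [Complex.sub_re, Complex.one_re, Complex.ofReal_re] at this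
  linarith

def IsPPTTest (M : BMat d) : Prop :=
  M.PosSemidef ∧ (1 - M).PosSemidef ∧ (ptB M).PosSemidef ∧ (1 - ptB M).PosSemidef

lemma isPPTTest_zero : IsPPTTest (0 : BMat d) := by
  have h : ((1 : BMat d) - 0).PosSemidef := by rw [sub_zero]; exact .one
  exact ⟨.zero, h, .zero, h⟩

lemma IsPPTTest.one_sub {M : BMat d} (hM : IsPPTTest M) : IsPPTTest (1 - M) := by
  obtain ⟨h₁, h₂, h₃, h₄⟩ := hM
  rw [IsPPTTest, ptB_one_sub, sub_sub_cancel, sub_sub_cancel]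
  exact ⟨h₂, h₁, h₄, h₃⟩

lemma EgPPT_eq_of_forall_le_of_exists_eq {γ : ℝ} {ρ σ : BMat d} {v : ℝ}
    (hle : ∀ M, IsPPTTest M → ((M * (ρ - (γ : ℂ) • σ)).trace).re ≤ v)
    (hv : ∃ M, IsPPTTest M ∧ ((M * (ρ - (γ : ℂ) • σ)).trace).re = v) :
    EgPPT γ ρ σ = v := by
  refine IsGreatest.csSup_eq ⟨?_, ?_⟩
  · obtain ⟨M, ⟨h₁, h₂, h₃, h₄⟩, rfl⟩ := hv
    exact ⟨M, h₁, h₂, h₃, h₄, rfl⟩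
  · rintro x ⟨M, h₁, h₂, h₃, h₄, rfl⟩
    exact hle M ⟨h₁, h₂, h₃, h₄⟩

lemma re_trace_mul_iso_sub (M : BMat d) (p q γ : ℝ) :
    ((M * (iso d q - (γ : ℂ) • iso d p)).trace).re =
      (q - γ * p) * ((M * maxEnt d).trace).re +
        ((1 - q) - γ * (1 - p)) / ((d : ℝ) ^ 2 - 1) *
          ((M.trace).re - ((M * maxEnt d).trace).re) := by
  have h : iso d q - (γ : ℂ) • iso d p =
      (q - γ * p) • maxEnt d + (((1 - q) - γ * (1 - p)) / ((d : ℝ) ^ 2 - 1)) • (1 - maxEnt d) := by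
    simp only [iso, maxEntPerp, ← Complex.coe_smul]
    push_cast
    module
  rw [h, Matrix.mul_add, mul_smul_comm, mul_smul_comm, trace_add, trace_smul, trace_smul,
    Matrix.mul_sub, Matrix.mul_one, trace_sub]
  simp only [Complex.real_smul, Complex.add_re, Complex.re_ofReal_mul, Complex.sub_re]

def isoTest (d : ℕ) : BMat d := maxEnt d + ((d : ℝ) + 1)⁻¹ • (1 - maxEnt d)

section isoTest

variable [NeZero d]

lemma isoTest_mul_maxEnt : isoTest d * maxEnt d = maxEnt d := by
  rw [isoTest, add_mul, smul_mul_assoc, isIdempotentElem_maxEnt.one_sub_mul_self, smul_zero,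
    add_zero, isIdempotentElem_maxEnt.eq]

lemma trace_isoTest : (isoTest d).trace = d := by
  have hd : (d : ℂ) + 1 ≠ 0 := by exact_mod_cast Nat.succ_ne_zero d
  rw [isoTest, trace_add, trace_smul, trace_sub, trace_maxEnt, trace_one_bipartite,
    Complex.real_smul]
  push_cast
  field_simp
  ring

lemma ptB_isoTest : ptB (isoTest d) = ((d : ℝ) + 1)⁻¹ • (1 + swapMat d) := by
  have hd : (d : ℝ) ≠ 0 := NeZero.ne _
  show ptB (maxEnt d) + ((d : ℝ) + 1)⁻¹ • (ptB 1 - ptB (maxEnt d)) = _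
  rw [ptB_one, ptB_maxEnt]
  match_scalars
  · field_simp
    ring
  · field_simp

lemma isPPTTest_isoTest : IsPPTTest (isoTest d) := by
  have hd : (1 : ℝ) ≤ d := by exact_mod_cast NeZero.one_le
  have hr₀ : 0 ≤ ((d : ℝ) + 1)⁻¹ := by positivity
  refine ⟨posSemidef_maxEnt.add (posSemidef_one_sub_maxEnt.smul hr₀), ?_, ?_, ?_⟩
  · have h : 1 - isoTest d = (1 - ((d : ℝ) + 1)⁻¹) • (1 - maxEnt d) := by
      rw [isoTest]; module
    rw [h]
    exact posSemidef_one_sub_maxEnt.smul (sub_nonneg.mpr (inv_le_one_of_one_le₀ (by linarith)))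
  · rw [ptB_isoTest]
    exact posSemidef_one_add_swapMat.smul hr₀
  · have h : 1 - ptB (isoTest d) =
        (1 - 2 * ((d : ℝ) + 1)⁻¹) • (1 : BMat d) + ((d : ℝ) + 1)⁻¹ • (1 - swapMat d) := by
      rw [ptB_isoTest]; module
    have h2 : 2 * ((d : ℝ) + 1)⁻¹ ≤ 1 := by
      rw [← div_eq_mul_inv, div_le_one (by positivity)]; linarith
    rw [h]
    exact (PosSemidef.one.smul (sub_nonneg.mpr h2)).add (posSemidef_one_sub_swapMat.smul hr₀)

end isoTest

lemma re_trace_isoTest_mul_iso_sub (hd : 1 < d) (p q γ : ℝ) :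
    ((isoTest d * (iso d q - (γ : ℂ) • iso d p)).trace).re =
      (q - γ * p) + ((1 - q) - γ * (1 - p)) / (d + 1) := by
  have : NeZero d := ⟨by omega⟩
  have hD : (1 : ℝ) < d := by exact_mod_cast hd
  have hD₂ : (d : ℝ) ^ 2 - 1 ≠ 0 := by nlinarith
  rw [re_trace_mul_iso_sub, isoTest_mul_maxEnt, trace_maxEnt, trace_isoTest, Complex.one_re,
    Complex.natCast_re]
  field_simp
  ring

lemma re_trace_one_sub_isoTest_mul_iso_sub (hd : 1 < d) (p q γ : ℝ) :
    (((1 - isoTest d) * (iso d q - (γ : ℂ) • iso d p)).trace).re =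
      d / (d + 1) * ((1 - q) - γ * (1 - p)) := by
  have : NeZero d := ⟨by omega⟩
  have hD : (1 : ℝ) < d := by exact_mod_cast hd
  have hD₂ : (d : ℝ) ^ 2 - 1 ≠ 0 := by nlinarith
  rw [re_trace_mul_iso_sub, Matrix.sub_mul, Matrix.one_mul, isoTest_mul_maxEnt, sub_self,
    trace_sub, trace_isoTest, trace_one_bipartite]
  simp only [trace_zero, Complex.zero_re, Complex.sub_re, Complex.natCast_re, Complex.ofReal_re]
  field_simp
  ring

end Bipartite

lemma isotropic_objective_le {D a b t m : ℝ} (hD : 1 < D) (hab : a + b ≤ 0)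
    (ht₀ : 0 ≤ t) (ht₁ : t ≤ 1) (hm₀ : D * t ≤ m) (hm₁ : m ≤ D ^ 2 - D + D * t) :
    a * t + b / (D ^ 2 - 1) * (m - t) ≤ max 0 (max (a + b / (D + 1)) (D / (D + 1) * b)) := by
  have hD₂ : 0 < D ^ 2 - 1 := by nlinarith
  set c := b / (D ^ 2 - 1) with hc
  have hc₁ : b / (D + 1) = c * (D - 1) := by rw [hc]; field_simp; ring
  have hc₂ : D / (D + 1) * b = c * (D ^ 2 - D) := by rw [hc]; field_simp; ring
  rw [hc₁, hc₂]
  rcases le_total b 0 with hb | hb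
  · have hc₀ : c ≤ 0 := div_nonpos_of_nonpos_of_nonneg hb hD₂.le
    have : a * t + c * (m - t) ≤ t * (a + c * (D - 1)) := by nlinarith
    rcases le_total (a + c * (D - 1)) 0 with hs | hs
    · exact (this.trans (mul_nonpos_of_nonneg_of_nonpos ht₀ hs)).trans (le_max_left _ _)
    · refine le_max_of_le_right (le_max_of_le_left ?_)
      nlinarith
  · have hc₀ : 0 ≤ c := div_nonneg hb hD₂.le
    refine le_max_of_le_right (le_max_of_le_right ?_)
    have hb' : c * (D ^ 2 - 1) = b := by rw [hc]; field_simp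
    have hm : c * (m - t) ≤ c * (D ^ 2 - D) + c * (D - 1) * t := by nlinarith
    have hs : a + c * (D - 1) ≤ 0 := by nlinarith
    nlinarith

theorem stmt_13_general (d : ℕ) (hd : 2 ≤ d) (p q : ℝ)
    (γ : ℝ) (hγ : 1 ≤ γ) :
    EgPPT γ (iso d q) (iso d p) =
      max 0 (max ((q - γ * p) + ((1 - q) - γ * (1 - p)) / (d + 1))
        ((d / (d + 1) : ℝ) * ((1 - q) - γ * (1 - p)))) := by
  have : NeZero d := ⟨by omega⟩
  have hD : (1 : ℝ) < d := by exact_mod_cast hd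
  have hab : (q - γ * p) + ((1 - q) - γ * (1 - p)) ≤ 0 := by linarith
  set a := q - γ * p
  set b := (1 - q) - γ * (1 - p)
  refine EgPPT_eq_of_forall_le_of_exists_eq (fun M ⟨h₁, h₂, h₃, h₄⟩ => ?_) ?_
  · rw [re_trace_mul_iso_sub]
    exact isotropic_objective_le hD hab (re_trace_mul_maxEnt_nonneg h₁)
      (re_trace_mul_maxEnt_le_one h₂) (natCast_mul_re_trace_mul_maxEnt_le h₃) (re_trace_le h₄)
  obtain h | h := max_choice 0 (max (a + b / (d + 1)) (d / (d + 1) * b)) <;> rw [h]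
  · exact ⟨0, isPPTTest_zero, by simp⟩
  obtain h | h := max_choice (a + b / (d + 1)) (d / (d + 1) * b) <;> rw [h]
  · exact ⟨isoTest d, isPPTTest_isoTest, re_trace_isoTest_mul_iso_sub hd p q γ⟩
  · exact ⟨1 - isoTest d, isPPTTest_isoTest.one_sub, re_trace_one_sub_isoTest_mul_iso_sub hd p q γ⟩

/-- PPT-measured hockey-stick divergence for isotropic states. -/
theorem stmt_13 (d : ℕ) (hd : 2 ≤ d) (p q : ℝ)
    (hp : p ∈ Set.Icc (0 : ℝ) 1) (hq : q ∈ Set.Icc (0 : ℝ) 1)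
    (γ : ℝ) (hγ : 1 ≤ γ) :
    EgPPT γ (iso d q) (iso d p) =
      max 0 (max ((q - γ * p) + ((1 - q) - γ * (1 - p)) / (d + 1))
        ((d / (d + 1) : ℝ) * ((1 - q) - γ * (1 - p)))) :=
  stmt_13_general d hd p q γ hγ
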